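/- arXiv:1110.0259 — 9 statements merged into one kernel-verified Lean document; each statement's English description precedes it below -/
import Mathlib

section
/- Let G be a directed graph and C a subset of its vertices. Define torso(G,C) as the directed graph on vertex set C with an edge (a,b) whenever G has a directed path from a to b whose internal vertices all lie outside C. Then for any S ⊆ C and any a, b ∈ C \ S, the graph G \ S has a directed a→b path if and only if torso(G,C) \ S has a directed a→b path. -/
variable {V : Type*}

/-- A single edge step in `G \ S`: an edge of `E` with both endpoints outside `S`. -/
def DStep (E : V → V → Prop) (S : Set V) (a b : V) : Prop :=
  E a b ∧ a ∉ S ∧ b ∉ S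

/-- `b` is reachable from `a` by a directed path in `G \ S`. -/
def DReach (E : V → V → Prop) (S : Set V) (a b : V) : Prop :=
  Relation.ReflTransGen (DStep E S) a b

/-- The set of vertices reachable from the set `X` in `G \ S`. -/
def RSet (E : V → V → Prop) (S X : Set V) : Set V :=
  {v | ∃ x ∈ X, DReach E S x v}

/-- `S` is an `X`–`Y` separator: disjoint from `X ∪ Y` and destroying all `X → Y` paths. -/
def IsSep (E : V → V → Prop) (X Y S : Set V) : Prop :=
  S ∩ (X ∪ Y) = ∅ ∧ ∀ x ∈ X, ∀ y ∈ Y, ¬ DReach E S x y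

/-- `S` is an inclusion-wise minimal `X`–`Y` separator. -/
def IsMinSep (E : V → V → Prop) (X Y S : Set V) : Prop :=
  IsSep E X Y S ∧ ∀ S', S' ⊂ S → ¬ IsSep E X Y S'

/-- `S` is an important `X`–`Y` separator: a minimal separator such that no separator of at
most the same size has a strictly larger set of vertices reachable from `X`. -/
def IsImpSep (E : V → V → Prop) (X Y S : Set V) : Prop :=
  IsMinSep E X Y S ∧
    ¬ ∃ S', IsSep E X Y S' ∧ S'.ncard ≤ S.ncard ∧ RSet E S X ⊂ RSet E S' X

/-- `S` is a (vertex) multiway cut of `(G, T)`. -/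
def IsMWC (E : V → V → Prop) (T S : Set V) : Prop :=
  S ∩ T = ∅ ∧ ∀ t₁ ∈ T, ∀ t₂ ∈ T, t₁ ≠ t₂ → ¬ DReach E S t₁ t₂

/-- The forward shadow of `S` with respect to `T`: vertices outside `S ∪ T` not reachable
from `T` in `G \ S`. -/
def fShadow (E : V → V → Prop) (T S : Set V) : Set V :=
  {v | v ∉ S ∧ v ∉ T ∧ ∀ t ∈ T, ¬ DReach E S t v}

/-- The reverse shadow of `S` with respect to `T`: vertices outside `S ∪ T` that cannot
reach `T` in `G \ S`. -/
def rShadow (E : V → V → Prop) (T S : Set V) : Set V :=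
  {v | v ∉ S ∧ v ∉ T ∧ ∀ t ∈ T, ¬ DReach E S v t}

/-- The adjacency of `torso(G, C)`: an edge `(a, b)` whenever `a, b ∈ C` and `G` has a
directed `a → b` path whose internal vertices all lie outside `C`. -/
def TorsoAdj (E : V → V → Prop) (C : Set V) (a b : V) : Prop :=
  a ∈ C ∧ b ∈ C ∧ ∃ w, E a w ∧ Relation.ReflTransGen (fun x y => x ∉ C ∧ E x y) w b


private lemma outside_reach_aux {E : V → V → Prop} {C S : Set V} (hSC : S ⊆ C)
    {w c : V} (h : Relation.ReflTransGen (fun x y => x ∉ C ∧ E x y) w c)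
    (hcS : c ∉ S) : DReach E S w c := by
  induction h using Relation.ReflTransGen.head_induction_on with
  | refl => exact .refl
  | @head x y hxy hrest ih =>
      refine Relation.ReflTransGen.head ⟨hxy.2, fun hx => hxy.1 (hSC hx), ?_⟩ ih
      rcases hrest.cases_head with rfl | ⟨z, hz, _⟩
      · exact hcS
      · exact fun hy => hz.1 (hSC hy)

private lemma fwd_aux {E : V → V → Prop} {C S : Set V} (hSC : S ⊆ C)
    {b : V} (hbC : b ∈ C) (hbS : b ∉ S) :
    ∀ {w}, DReach E S w b →
      (w ∈ C → DReach (TorsoAdj E C) S w b) ∧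
      (w ∉ C → ∃ c ∈ C, c ∉ S ∧ Relation.ReflTransGen (fun x y => x ∉ C ∧ E x y) w c ∧
        DReach (TorsoAdj E C) S c b) := by
  intro w h
  induction h using Relation.ReflTransGen.head_induction_on with
  | refl =>
      exact ⟨fun _ => .refl, fun hb => absurd hbC hb⟩
  | @head x y hxy _ ih =>
      obtain ⟨hExy, hxS, hyS⟩ := hxy
      constructor
      · intro hxC
        by_cases hyC : y ∈ C
        · exact Relation.ReflTransGen.head
            ⟨⟨hxC, hyC, y, hExy, .refl⟩, hxS, hyS⟩ (ih.1 hyC)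
        · obtain ⟨c, hcC, hcS, hpath, hreach⟩ := ih.2 hyC
          exact Relation.ReflTransGen.head
            ⟨⟨hxC, hcC, y, hExy, hpath⟩, hxS, hcS⟩ hreach
      · intro hxC
        by_cases hyC : y ∈ C
        · exact ⟨y, hyC, hyS, Relation.ReflTransGen.single ⟨hxC, hExy⟩, ih.1 hyC⟩
        · obtain ⟨c, hcC, hcS, hpath, hreach⟩ := ih.2 hyC
          exact ⟨c, hcC, hcS, Relation.ReflTransGen.head ⟨hxC, hExy⟩ hpath, hreach⟩

/-- **torso preserves separation.** For `S ⊆ C` and `a, b ∈ C \ S`,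
`G \ S` has a directed `a → b` path iff `torso(G,C) \ S` has one. -/
theorem torso_preserves_separation (E : V → V → Prop) (C S : Set V) (hSC : S ⊆ C)
    {a b : V} (haC : a ∈ C) (hbC : b ∈ C) (haS : a ∉ S) (hbS : b ∉ S) :
    DReach E S a b ↔ DReach (TorsoAdj E C) S a b := by
  constructor
  · intro h
    exact (fwd_aux hSC hbC hbS h).1 haC
  · intro h
    induction h with
    | refl => exact .refl
    | tail _ hstep ih =>
        obtain ⟨⟨hmC, _, w, hEw, hout⟩, hmS, hcS⟩ := hstep
        refine (ih hmC hmS).trans (Relation.ReflTransGen.head ⟨hEw, hmS, ?_⟩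
          (outside_reach_aux hSC hout hcS))
        rcases hout.cases_head with rfl | ⟨z, hz, _⟩
        · exact hcS
        · exact fun hw => hz.1 (hSC hw)
end

section
/- If S is a shadowless solution for a Directed Multiway Cut instance (G,T,p) — meaning S is a set of at most p nonterminal vertices whose removal disconnects every ordered pair of distinct terminals, and every vertex of G \ S both reaches T and is reachable from T in G \ S — then S is also a multiway cut of the underlying undirected graph: in the undirected graph obtained from G by forgetting edge orientations, deleting S disconnects every pair of distinct terminals. -/
variable {V : Type*}

/-- A shadowless solution of Directed Multiway Cut is also a multiway cut
of the underlying undirected graph. -/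
theorem shadowless_solution_is_undirected_solution (E : V → V → Prop) (T S : Set V) (p : ℕ)
    (hdisj : S ∩ T = ∅) (hsize : S.ncard ≤ p)
    (hcut : ∀ t₁ ∈ T, ∀ t₂ ∈ T, t₁ ≠ t₂ → ¬ DReach E S t₁ t₂)
    (hshadowless : ∀ v, v ∉ S → v ∉ T →
      (∃ t ∈ T, DReach E S t v) ∧ (∃ t ∈ T, DReach E S v t)) :
    ∀ t₁ ∈ T, ∀ t₂ ∈ T, t₁ ≠ t₂ → ¬ DReach (fun a b => E a b ∨ E b a) S t₁ t₂ := by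
  intro t₁ ht₁ t₂ ht₂ hne hreach
  have key : ∀ t ∈ T, ∀ t' ∈ T, ∀ v, DReach E S t v → DReach E S v t' → t = t' := by
    intro t ht t' ht' v h1 h2
    by_contra h
    exact hcut t ht t' ht' h (h1.trans h2)
  have main : ∀ v, Relation.ReflTransGen (DStep (fun a b => E a b ∨ E b a) S) t₁ v →
      (∀ t ∈ T, DReach E S v t → t = t₁) ∧ (∀ t ∈ T, DReach E S t v → t = t₁) := by
    intro v h
    induction h with
    | refl =>
      exact ⟨fun t ht h => (key t₁ ht₁ t ht t₁ .refl h).symm,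
        fun t ht h => key t ht t₁ ht₁ t₁ h .refl⟩
    | @tail b c hb hstep ih =>
      obtain ⟨he, hbS, hcS⟩ := hstep
      cases he with
      | inl he =>
        have hbc : DReach E S b c := Relation.ReflTransGen.single ⟨he, hbS, hcS⟩
        have fwd : ∀ t ∈ T, DReach E S c t → t = t₁ :=
          fun t ht h => ih.1 t ht (hbc.trans h)
        refine ⟨fwd, fun t ht h => ?_⟩
        by_cases hcT : c ∈ T
        · exact (key t ht c hcT c h .refl).trans (ih.1 c hcT hbc)
        · obtain ⟨_, ⟨t', ht', hct'⟩⟩ := hshadowless c hcS hcT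
          exact (key t ht t' ht' c h hct').trans (fwd t' ht' hct')
      | inr he =>
        have hcb : DReach E S c b := Relation.ReflTransGen.single ⟨he, hcS, hbS⟩
        have bwd : ∀ t ∈ T, DReach E S t c → t = t₁ :=
          fun t ht h => ih.2 t ht (h.trans hcb)
        refine ⟨fun t ht h => ?_, bwd⟩
        by_cases hcT : c ∈ T
        · exact ((key c hcT t ht c .refl h).symm).trans (ih.2 c hcT hcb)
        · obtain ⟨⟨t', ht', ht'c⟩, _⟩ := hshadowless c hcS hcT
          exact ((key t' ht' t ht c ht'c h).symm).trans (bwd t' ht' ht'c)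
  exact hne.symm ((main t₂ hreach).1 t₂ ht₂ .refl)
end

section
/- If S is a shadowless solution of a Directed Multiway Cut instance, then every vertex of G \ S lies in the strongly connected component of exactly one terminal, and there are no edges of G \ S between the strongly connected components of distinct terminals. -/
variable {V : Type*}

/-- For a shadowless solution `S`, every vertex of `G \ S` lies in the
strongly connected component of exactly one terminal, and no edge of `G \ S` goes between
the strongly connected components of distinct terminals. -/
theorem shadowless_scc_structure (E : V → V → Prop) (T S : Set V)
    (hdisj : S ∩ T = ∅)
    (hcut : ∀ t₁ ∈ T, ∀ t₂ ∈ T, t₁ ≠ t₂ → ¬ DReach E S t₁ t₂)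
    (hshadowless : ∀ v, v ∉ S → v ∉ T →
      (∃ t ∈ T, DReach E S t v) ∧ (∃ t ∈ T, DReach E S v t)) :
    (∀ v, v ∉ S → ∃! t, t ∈ T ∧ DReach E S v t ∧ DReach E S t v) ∧
      (∀ a b t₁ t₂, E a b → a ∉ S → b ∉ S → t₁ ∈ T → t₂ ∈ T →
        DReach E S a t₁ → DReach E S t₁ a → DReach E S b t₂ → DReach E S t₂ b →
        t₁ = t₂) := by
  constructor
  · intro v hv
    by_cases hvT : v ∈ T
    · refine ⟨v, ⟨hvT, Relation.ReflTransGen.refl, Relation.ReflTransGen.refl⟩, ?_⟩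
      rintro t ⟨htT, hvt, htv⟩
      by_contra hne
      exact hcut v hvT t htT (fun h => hne h.symm) hvt
    · obtain ⟨⟨t₁, ht₁T, ht₁v⟩, ⟨t₂, ht₂T, hvt₂⟩⟩ := hshadowless v hv hvT
      have heq : t₁ = t₂ := by
        by_contra hne
        exact hcut t₁ ht₁T t₂ ht₂T hne (ht₁v.trans hvt₂)
      subst heq
      refine ⟨t₁, ⟨ht₁T, hvt₂, ht₁v⟩, ?_⟩
      rintro t ⟨htT, hvt, htv⟩
      by_contra hne
      exact hcut t htT t₁ ht₁T hne (htv.trans hvt₂)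
  · intro a b t₁ t₂ hE ha hb ht₁ ht₂ hat₁ ht₁a hbt₂ ht₂b
    by_contra hne
    exact hcut t₁ ht₁ t₂ ht₂ hne
      (ht₁a.trans ((Relation.ReflTransGen.single ⟨hE, ha, hb⟩).trans hbt₂))
end

section
/- Let I = (G,T,p) be a Directed Multiway Cut instance and Z ⊆ V(G)\T. Let G' = torso(G, V(G)\Z). If S ⊆ V(G') is a multiway cut of (G',T), then S is also a multiway cut of (G,T). -/
variable {V : Type*}

/-!
A path of `G \ S` between two vertices of `C` is cut by its vertices in `C` into segments whose
internal vertices avoid `C`, i.e. into edges of the torso; these vertices avoid `S`, so the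
segments form a path of `torso(G, C) \ S`. Hence a separation in the torso is also one in `G`.
-/

lemma DReach.exists_torso_entry {E : V → V → Prop} {S C : Set V} {w b : V}
    (hb : b ∈ C) (hbS : b ∉ S) (h : DReach E S w b) :
    ∃ c ∈ C, c ∉ S ∧ Relation.ReflTransGen (fun x y => x ∉ C ∧ E x y) w c ∧
      DReach (TorsoAdj E C) S c b := by
  induction h using Relation.ReflTransGen.head_induction_on with
  | refl => exact ⟨b, hb, hbS, .refl, .refl⟩
  | @head w y hstep _ ih =>
    obtain ⟨hE, hwS, -⟩ := hstep
    obtain ⟨c, hc, hcS, houtside, htorso⟩ := ih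
    by_cases hw : w ∈ C
    · exact ⟨w, hw, hwS, .refl, .head ⟨⟨hw, hc, y, hE, houtside⟩, hwS, hcS⟩ htorso⟩
    · exact ⟨c, hc, hcS, .head ⟨hw, hE⟩ houtside, htorso⟩

lemma DReach.torso {E : V → V → Prop} {S C : Set V} {a b : V}
    (ha : a ∈ C) (hb : b ∈ C) (hbS : b ∉ S) (h : DReach E S a b) :
    DReach (TorsoAdj E C) S a b := by
  obtain ⟨c, -, -, houtside, htorso⟩ := h.exists_torso_entry hb hbS
  rcases houtside.cases_head with rfl | ⟨_, ⟨haC, -⟩, -⟩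
  · exact htorso
  · exact absurd ha haC

theorem torso_solution_is_solution_general (E : V → V → Prop) (T Z S : Set V)
    (hZT : Z ∩ T = ∅)
    (h : IsMWC (TorsoAdj E Zᶜ) T S) :
    IsMWC E T S := by
  obtain ⟨hST, hsep⟩ := h
  have hTZ : ∀ t ∈ T, t ∈ Zᶜ := fun t ht hz => Set.eq_empty_iff_forall_notMem.mp hZT t ⟨hz, ht⟩
  refine ⟨hST, fun t₁ h₁ t₂ h₂ hne hreach => hsep t₁ h₁ t₂ h₂ hne ?_⟩
  have h₂S : t₂ ∉ S := fun hs => Set.eq_empty_iff_forall_notMem.mp hST t₂ ⟨hs, h₂⟩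
  exact hreach.torso (hTZ t₁ h₁) (hTZ t₂ h₂) h₂S

/-- Any multiway cut of the torso instance `(torso(G, V∖Z), T)` is also a
multiway cut of the original instance `(G, T)`. -/
theorem torso_solution_is_solution (E : V → V → Prop) (T Z S : Set V)
    (hZT : Z ∩ T = ∅) (hSZ : S ∩ Z = ∅)
    (h : IsMWC (TorsoAdj E Zᶜ) T S) :
    IsMWC E T S :=
  torso_solution_is_solution_general E T Z S hZT h
end

section
/- Let G be a directed graph and X, Y disjoint nonempty vertex sets. If S₁ and S₂ are X–Y separators, then both N⁺(R₁ ∪ R₂) and N⁺(R₁ ∩ R₂) are X–Y separators, where Rᵢ = R⁺(X, G\Sᵢ) is the set of vertices reachable from X in G \ Sᵢ. -/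
variable {V : Type*}

/-- The out-neighborhood of a vertex set `A`. -/
def NOut (E : V → V → Prop) (A : Set V) : Set V :=
  {v | v ∉ A ∧ ∃ a ∈ A, E a v}

/-!
Both `N⁺(R₁ ∪ R₂)` and `N⁺(R₁ ∩ R₂)` lie in `S₁ ∪ S₂`, because `N⁺(Rᵢ) ⊆ Sᵢ`; hence they avoid
`X ∪ Y`. A path that starts in a set `A` can only leave `A` through `N⁺(A)`, so removing
`N⁺(A)` traps every path from `X ⊆ A` inside `A`, which misses `Y`.
-/

variable {E : V → V → Prop} {X Y S : Set V}

lemma subset_rSet : X ⊆ RSet E S X :=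
  fun x hx => ⟨x, hx, Relation.ReflTransGen.refl⟩

lemma IsSep.disjoint_rSet (h : IsSep E X Y S) : Disjoint (RSet E S X) Y :=
  Set.disjoint_left.2 fun _ ⟨x, hx, hr⟩ hy => h.2 x hx _ hy hr

lemma IsSep.disjoint_source (h : IsSep E X Y S) : Disjoint S X :=
  Set.disjoint_iff_inter_eq_empty.2 <| Set.subset_empty_iff.1 <|
    h.1 ▸ Set.inter_subset_inter_right _ Set.subset_union_left

lemma IsSep.union_inter_eq_empty {S₁ S₂ : Set V} (h₁ : IsSep E X Y S₁) (h₂ : IsSep E X Y S₂) :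
    (S₁ ∪ S₂) ∩ (X ∪ Y) = ∅ := by
  rw [Set.union_inter_distrib_right, h₁.1, h₂.1, Set.union_empty]

lemma notMem_of_mem_rSet (hSX : Disjoint S X) {v : V} (hv : v ∈ RSet E S X) : v ∉ S := by
  obtain ⟨x, hx, hr⟩ := hv
  induction hr with
  | refl => exact Set.disjoint_right.1 hSX hx
  | tail _ hstep _ => exact hstep.2.2

lemma nOut_rSet_subset (hSX : Disjoint S X) : NOut E (RSet E S X) ⊆ S := by
  rintro v ⟨hvR, a, ⟨x, hx, hr⟩, hav⟩
  by_contra hvS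
  exact hvR ⟨x, hx, hr.tail ⟨hav, notMem_of_mem_rSet hSX ⟨x, hx, hr⟩, hvS⟩⟩

lemma nOut_union_subset (A B : Set V) : NOut E (A ∪ B) ⊆ NOut E A ∪ NOut E B := by
  rintro v ⟨hv, a, ha | ha, hav⟩
  · exact Or.inl ⟨fun h => hv (Or.inl h), a, ha, hav⟩
  · exact Or.inr ⟨fun h => hv (Or.inr h), a, ha, hav⟩

lemma nOut_inter_subset (A B : Set V) : NOut E (A ∩ B) ⊆ NOut E A ∪ NOut E B := by
  rintro v ⟨hv, a, ⟨haA, haB⟩, hav⟩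
  by_cases hvA : v ∈ A
  · exact Or.inr ⟨fun hvB => hv ⟨hvA, hvB⟩, a, haB, hav⟩
  · exact Or.inl ⟨hvA, a, haA, hav⟩

lemma mem_of_dReach_nOut {A : Set V} {a v : V} (ha : a ∈ A) (h : DReach E (NOut E A) a v) :
    v ∈ A := by
  induction h with
  | refl => exact ha
  | tail _ hstep ih => exact by_contra fun hc => hstep.2.2 ⟨hc, _, ih, hstep.1⟩

lemma isSep_nOut {A : Set V} (hXA : X ⊆ A) (hAY : Disjoint A Y)
    (hN : NOut E A ∩ (X ∪ Y) = ∅) : IsSep E X Y (NOut E A) :=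
  ⟨hN, fun _ hx _ hy hr => Set.disjoint_left.1 hAY (mem_of_dReach_nOut (hXA hx) hr) hy⟩

lemma isSep_nOut_of_subset_union {A S₁ S₂ : Set V} (h₁ : IsSep E X Y S₁) (h₂ : IsSep E X Y S₂)
    (hXA : X ⊆ A) (hAY : Disjoint A Y) (hN : NOut E A ⊆ S₁ ∪ S₂) : IsSep E X Y (NOut E A) :=
  isSep_nOut hXA hAY <| Set.subset_empty_iff.1 <|
    (Set.inter_subset_inter_left _ hN).trans (h₁.union_inter_eq_empty h₂).subset

theorem nout_of_reaches_is_separator_general (E : V → V → Prop) (X Y S₁ S₂ : Set V)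
    (h₁ : IsSep E X Y S₁) (h₂ : IsSep E X Y S₂) :
    IsSep E X Y (NOut E (RSet E S₁ X ∪ RSet E S₂ X)) ∧
      IsSep E X Y (NOut E (RSet E S₁ X ∩ RSet E S₂ X)) := by
  have hN : NOut E (RSet E S₁ X) ∪ NOut E (RSet E S₂ X) ⊆ S₁ ∪ S₂ :=
    Set.union_subset_union (nOut_rSet_subset h₁.disjoint_source)
      (nOut_rSet_subset h₂.disjoint_source)
  refine ⟨isSep_nOut_of_subset_union h₁ h₂ ?_ ?_ ((nOut_union_subset _ _).trans hN),
    isSep_nOut_of_subset_union h₁ h₂ ?_ ?_ ((nOut_inter_subset _ _).trans hN)⟩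
  · exact subset_rSet.trans Set.subset_union_left
  · exact Set.disjoint_union_left.2 ⟨h₁.disjoint_rSet, h₂.disjoint_rSet⟩
  · exact Set.subset_inter subset_rSet subset_rSet
  · exact h₁.disjoint_rSet.mono_left Set.inter_subset_left

/-- If `S₁, S₂` are `X`–`Y` separators then both `N⁺(R₁ ∪ R₂)` and
`N⁺(R₁ ∩ R₂)` are `X`–`Y` separators, where `Rᵢ` is the set of vertices reachable from `X`
in `G \ Sᵢ`. -/
theorem nout_of_reaches_is_separator (E : V → V → Prop) (X Y S₁ S₂ : Set V)
    (hX : X.Nonempty) (hY : Y.Nonempty) (hXY : Disjoint X Y)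
    (h₁ : IsSep E X Y S₁) (h₂ : IsSep E X Y S₂) :
    IsSep E X Y (NOut E (RSet E S₁ X ∪ RSet E S₂ X)) ∧
      IsSep E X Y (NOut E (RSet E S₁ X ∩ RSet E S₂ X)) :=
  nout_of_reaches_is_separator_general E X Y S₁ S₂ h₁ h₂
end

section
/- Let S be an important X–Y separator in a directed graph G and let v ∈ S. Then S \ {v} is an important X–Y separator in the graph G \ {v}. -/
variable {V : Type*}

/-!
Deleting `v` from the graph has the same effect on reachability as adding `v` to the deleted
set, so `T ↦ insert v T` turns `X`–`Y` separators of `G \ {v}` into separators of `G`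
containing `v`, with the same reachable set. Minimality and importance of `S \ {v}` then
follow from those of `S`; the only subtle point is the cardinality comparison, which for an
infinite `S` (where `ncard` is `0`) needs minimality to rule out `S' = ∅`.
-/

theorem Set.ncard_insert_le_of_ncard_le_sdiff {S S' : Set V} {v : V} (hv : v ∈ S)
    (hcard : S'.ncard ≤ (S \ {v}).ncard) (hempty : S' = ∅ → S.Finite) :
    (insert v S').ncard ≤ S.ncard := by
  by_cases hS : S.Finite
  · calc (insert v S').ncard ≤ S'.ncard + 1 := Set.ncard_insert_le v S'
      _ ≤ (S \ {v}).ncard + 1 := by omega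
      _ = S.ncard := Set.ncard_sdiff_singleton_add_one hv hS
  · have hS' : S'.Infinite := by
      intro hS'
      have hdiff : (S \ {v}).Infinite := fun h => hS (by simpa using h.insert v)
      rw [hdiff.ncard, Nat.le_zero, Set.ncard_eq_zero hS'] at hcard
      exact hS (hempty hcard)
    rw [(hS'.mono (Set.subset_insert v S')).ncard]
    exact Nat.zero_le _

section DeleteVertex

variable (E : V → V → Prop) (v : V)

theorem dStep_delete_vertex (T : Set V) :
    DStep (fun a b => E a b ∧ a ≠ v ∧ b ≠ v) T = DStep E (insert v T) := by
  funext a b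
  simp only [DStep, Set.mem_insert_iff, eq_iff_iff]
  tauto

theorem dReach_delete_vertex (T : Set V) :
    DReach (fun a b => E a b ∧ a ≠ v ∧ b ≠ v) T = DReach E (insert v T) := by
  unfold DReach
  rw [dStep_delete_vertex]

theorem rSet_delete_vertex (T X : Set V) :
    RSet (fun a b => E a b ∧ a ≠ v ∧ b ≠ v) T X = RSet E (insert v T) X := by
  unfold RSet
  rw [dReach_delete_vertex]

theorem isSep_delete_vertex_iff {X Y : Set V} (hv : v ∉ X ∪ Y) (T : Set V) :
    IsSep (fun a b => E a b ∧ a ≠ v ∧ b ≠ v) X Y T ↔ IsSep E X Y (insert v T) := by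
  rw [IsSep, IsSep, dReach_delete_vertex, Set.insert_inter_of_notMem hv]

end DeleteVertex

variable {E : V → V → Prop} {X Y S : Set V} {v : V}

theorem IsSep.notMem_union_of_mem (hS : IsSep E X Y S) (hv : v ∈ S) : v ∉ X ∪ Y :=
  fun h => (hS.1 ▸ Set.mem_inter hv h : v ∈ (∅ : Set V))

theorem IsMinSep.eq_of_subset {T : Set V} (hS : IsMinSep E X Y S) (hTS : T ⊆ S)
    (hT : IsSep E X Y T) : T = S :=
  hTS.eq_of_not_ssubset fun hlt => hS.2 T hlt hT

theorem IsMinSep.delete_vertex (hS : IsMinSep E X Y S) (hv : v ∈ S) :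
    IsMinSep (fun a b => E a b ∧ a ≠ v ∧ b ≠ v) X Y (S \ {v}) := by
  have hvXY := hS.1.notMem_union_of_mem hv
  have hSep : IsSep E X Y (insert v (S \ {v})) := by
    rw [Set.insert_sdiff_self_of_mem hv]
    exact hS.1
  refine ⟨(isSep_delete_vertex_iff E v hvXY _).2 hSep, ?_⟩
  intro T hlt hT
  have hTS : insert v T = S :=
    hS.eq_of_subset (Set.insert_subset hv (hlt.subset.trans Set.sdiff_subset))
      ((isSep_delete_vertex_iff E v hvXY T).1 hT)
  refine hlt.not_subset fun w hw => ?_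
  rw [← hTS] at hw
  exact hw.1.resolve_left hw.2

/-- If `S` is an important `X`–`Y` separator and `v ∈ S`, then `S \ {v}` is
an important `X`–`Y` separator in the graph `G \ {v}`. -/
theorem important_separator_delete_vertex (E : V → V → Prop) (X Y S : Set V)
    (hImp : IsImpSep E X Y S) (v : V) (hv : v ∈ S) :
    IsImpSep (fun a b => E a b ∧ a ≠ v ∧ b ≠ v) X Y (S \ {v}) := by
  obtain ⟨hMin, hBest⟩ := hImp
  have hvXY := hMin.1.notMem_union_of_mem hv
  refine ⟨hMin.delete_vertex hv, ?_⟩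
  rintro ⟨S', hS', hcard, hlt⟩
  rw [isSep_delete_vertex_iff E v hvXY] at hS'
  rw [rSet_delete_vertex, rSet_delete_vertex, Set.insert_sdiff_self_of_mem hv] at hlt
  refine hBest ⟨insert v S', hS', Set.ncard_insert_le_of_ncard_le_sdiff hv hcard ?_, hlt⟩
  rintro rfl
  rw [insert_empty_eq] at hS'
  rw [← hMin.eq_of_subset (Set.singleton_subset_iff.2 hv) hS']
  exact Set.finite_singleton v
end

section
/- Pushing lemma: Let S be a multiway cut of a Directed Multiway Cut instance (G,T) and let v be in the reverse shadow of S. Then either S contains a subset S_v that is an important v–T separator, or there exists another multiway cut S' with |S'| ≤ |S|, r(S) ⊊ r(S'), and r(S) ∪ f(S) ∪ S ⊆ r(S') ∪ f(S') ∪ S'. -/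
variable {V : Type*}

/-!
Shrink `S` to an inclusion-minimal `v`–`T` separator `Sv ⊆ S`. If `Sv` is not important, some
separator `S''` with `|S''| ≤ |Sv|` reaches strictly more from `v`; push `S` onto it by setting
`S' = (S \ Sv) ∪ (S'' \ r(S))`. By minimality, every vertex of `Sv \ S''` has an in-neighbour
reachable from `v` in `G \ Sv`, hence in `G \ S''`. So if a vertex of `(S ∪ S'') \ S'` reached `T`
in `G \ S'`, then after the last such vertex on the path the walk would avoid `S ∪ S''`, and it
would lead to `T` either from `v` avoiding `S''` or from `r(S)` avoiding `S`. Hence every vertex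
dropped from `S` lies in `r(S')`, and all claims follow from this, with a vertex of `Sv \ S''`
witnessing `r(S) ≠ r(S')`.
-/

section Reachability

variable {E : V → V → Prop} {B C D : Set V} {a b : V}

lemma DStep.union (h : DStep E C a b) (ha : a ∉ B) (hb : b ∉ B) : DStep E (C ∪ B) a b :=
  ⟨h.1, fun h' => h'.elim h.2.1 ha, fun h' => h'.elim h.2.2 hb⟩

lemma DReach.anti (hCD : C ⊆ D) (h : DReach E D a b) : DReach E C a b :=
  Relation.ReflTransGen.mono
    (fun _ _ hs => ⟨hs.1, fun ha => hs.2.1 (hCD ha), fun hb => hs.2.2 (hCD hb)⟩) _ _ h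

lemma DReach.notMem (h : DReach E C a b) (ha : a ∉ C) : b ∉ C := by
  induction h with
  | refl => exact ha
  | tail _ hstep _ => exact hstep.2.2

lemma DReach.exists_first_entry (h : DReach E C a b) (ha : a ∉ B) :
    DReach E (C ∪ B) a b ∨
      ∃ u w, DReach E (C ∪ B) a u ∧ DStep E C u w ∧ w ∈ B ∧ DReach E C w b := by
  induction h using Relation.ReflTransGen.head_induction_on with
  | refl => exact Or.inl .refl
  | @head x c hstep hrest ih =>
    by_cases hc : c ∈ B
    · exact Or.inr ⟨x, c, .refl, hstep, hc, hrest⟩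
    · rcases ih hc with hcb | ⟨u, w, hcu, huw, hw, hwb⟩
      · exact Or.inl (.head (hstep.union ha hc) hcb)
      · exact Or.inr ⟨u, w, .head (hstep.union ha hc) hcu, huw, hw, hwb⟩

lemma DReach.exists_last_exit (h : DReach E C a b) (ha : a ∈ B) (hb : b ∉ B) :
    ∃ w ∈ B, ∃ u, DStep E C w u ∧ u ∉ B ∧ DReach E (C ∪ B) u b := by
  induction h with
  | refl => exact absurd ha hb
  | @tail c b' _ hstep ih =>
    by_cases hc : c ∈ B
    · exact ⟨c, hc, b', hstep, hb, .refl⟩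
    · obtain ⟨w, hw, u, hwu, hu, huc⟩ := ih hc
      exact ⟨w, hw, u, hwu, hu, huc.tail (hstep.union hc hb)⟩

end Reachability

section Separators

variable {E : V → V → Prop} {X Y S S' : Set V} {x w : V}

lemma IsSep.notMem_left (h : IsSep E X Y S) (hx : x ∈ X) : x ∉ S :=
  fun hs => h.1.subset ⟨hs, Or.inl hx⟩

lemma IsSep.notMem_right (h : IsSep E X Y S) (hx : x ∈ Y) : x ∉ S :=
  fun hs => h.1.subset ⟨hs, Or.inr hx⟩

lemma IsSep.exists_isMinSep_subset [Finite V] (h : IsSep E X Y S) :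
    ∃ S₀ ⊆ S, IsMinSep E X Y S₀ := by
  obtain ⟨S₀, hS₀S, hmin⟩ := exists_minimal_le_of_wellFoundedLT (IsSep E X Y) S h
  exact ⟨S₀, hS₀S, hmin.prop, fun S' hS' hsep => hS'.not_ge (hmin.le_of_le hsep hS'.le)⟩

lemma IsMinSep.exists_adj_of_mem (h : IsMinSep E X Y S) (hw : w ∈ S) :
    ∃ u ∈ RSet E S X, E u w := by
  obtain ⟨x, hx, y, hy, hxy⟩ : ∃ x ∈ X, ∃ y ∈ Y, DReach E (S \ {w}) x y := by
    by_contra! hc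
    refine h.2 _ (Set.sdiff_singleton_ssubset.2 hw) ⟨?_, hc⟩
    exact Set.subset_empty_iff.1 (h.1.1 ▸ Set.inter_subset_inter_left _ Set.sdiff_subset)
  have hxw : x ∉ ({w} : Set V) := fun hxw => h.1.notMem_left hx (hxw ▸ hw)
  have hS : S \ {w} ∪ {w} = S := Set.sdiff_union_of_subset (Set.singleton_subset_iff.2 hw)
  rcases hxy.exists_first_entry hxw with hxy | ⟨u, w', hxu, huw, rfl, -⟩
  · exact absurd (hS ▸ hxy) (h.1.2 x hx y hy)
  · exact ⟨u, ⟨x, hx, hS ▸ hxu⟩, huw.1⟩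

lemma IsMinSep.diff_subset_rSet (h : IsMinSep E X Y S) (hS' : IsSep E X Y S')
    (hR : RSet E S X ⊆ RSet E S' X) : S \ S' ⊆ RSet E S' X := by
  rintro w ⟨hw, hwS'⟩
  obtain ⟨u, hu, huw⟩ := h.exists_adj_of_mem hw
  obtain ⟨x, hx, hxu⟩ := hR hu
  exact ⟨x, hx, hxu.tail ⟨huw, hxu.notMem (hS'.notMem_left hx), hwS'⟩⟩

end Separators

section Shadows

variable {E : V → V → Prop} {T S S' : Set V} {v w x y : V}

lemma isSep_singleton_of_mem_rShadow (hST : S ∩ T = ∅) (hv : v ∈ rShadow E T S) :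
    IsSep E {v} T S := by
  refine ⟨?_, fun _ hx t ht => hx ▸ hv.2.2 t ht⟩
  rw [Set.inter_union_distrib_left, hST, Set.union_empty]
  exact Set.inter_singleton_eq_empty.2 hv.1

lemma mem_rShadow_of_dreach (hw : w ∈ rShadow E T S) (h : DReach E S w x) :
    x ∈ rShadow E T S :=
  ⟨h.notMem hw.1, fun hx => hw.2.2 x hx h, fun t ht hxt => hw.2.2 t ht (h.trans hxt)⟩

section DiffSubsetRShadow

variable (hdiff : S \ S' ⊆ rShadow E T S')
include hdiff

lemma dreach_or_mem_rShadow (hx : x ∉ S) (h : DReach E S' x y) :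
    DReach E S x y ∨ y ∈ rShadow E T S' := by
  rcases h.exists_first_entry hx with h' | ⟨u, w, -, huw, hw, hwy⟩
  · exact Or.inl (h'.anti Set.subset_union_right)
  · exact Or.inr (mem_rShadow_of_dreach (hdiff ⟨hw, huw.2.2⟩) hwy)

lemma IsMWC.of_diff_subset_rShadow (h : IsMWC E T S) (hS'T : S' ∩ T = ∅) : IsMWC E T S' :=
  ⟨hS'T, fun t₁ h₁ t₂ h₂ hne h₁₂ =>
    (dreach_or_mem_rShadow hdiff (fun hs => h.1.subset ⟨hs, h₁⟩) h₁₂).elim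
      (h.2 t₁ h₁ t₂ h₂ hne) fun hr => hr.2.1 h₂⟩

variable (hr : Disjoint (rShadow E T S) S')
include hr

lemma rShadow_subset_of_diff_subset : rShadow E T S ⊆ rShadow E T S' := fun _ hx =>
  ⟨Set.disjoint_left.1 hr hx, hx.2.1, fun t ht hxt =>
    (dreach_or_mem_rShadow hdiff hx.1 hxt).elim (hx.2.2 t ht) fun hrt => hrt.2.1 ht⟩

lemma shadows_union_subset_of_diff_subset (hST : S ∩ T = ∅) :
    rShadow E T S ∪ fShadow E T S ∪ S ⊆ rShadow E T S' ∪ fShadow E T S' ∪ S' := by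
  rintro x ((hx | hx) | hx)
  · exact Or.inl (Or.inl (rShadow_subset_of_diff_subset hdiff hr hx))
  · by_cases hxS' : x ∈ S'
    · exact Or.inr hxS'
    by_cases hreach : ∃ t ∈ T, DReach E S' t x
    · obtain ⟨t, ht, htx⟩ := hreach
      exact Or.inl (Or.inl ((dreach_or_mem_rShadow hdiff (fun hs => hST.subset ⟨hs, ht⟩)
        htx).resolve_left (hx.2.2 t ht)))
    · simp only [not_exists, not_and] at hreach
      exact Or.inl (Or.inr ⟨hxS', hx.2.1, hreach⟩)
  · by_cases hxS' : x ∈ S'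
    · exact Or.inr hxS'
    · exact Or.inl (Or.inl (hdiff ⟨hx, hxS'⟩))

end DiffSubsetRShadow

end Shadows

section PushedCut

variable {E : V → V → Prop} {T X S Sv S'' : Set V}

def pushedCut (E : V → V → Prop) (T S Sv S'' : Set V) : Set V :=
  (S \ Sv) ∪ (S'' \ rShadow E T S)

lemma disjoint_rShadow_pushedCut : Disjoint (rShadow E T S) (pushedCut E T S Sv S'') :=
  Set.disjoint_left.2 fun _ hx hx' => hx'.elim (fun h => hx.1 h.1) (fun h => h.2 hx)

lemma pushedCut_inter_eq_empty (hST : S ∩ T = ∅) (hS'' : IsSep E X T S'') :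
    pushedCut E T S Sv S'' ∩ T = ∅ :=
  Set.subset_empty_iff.1 fun _ ⟨hx, hxT⟩ =>
    hx.elim (fun h => hST.subset ⟨h.1, hxT⟩) (fun h => hS''.notMem_right hxT h.1)

lemma ncard_pushedCut_le [Finite V] (hSvS : Sv ⊆ S) (hcard : S''.ncard ≤ Sv.ncard) :
    (pushedCut E T S Sv S'').ncard ≤ S.ncard :=
  calc (pushedCut E T S Sv S'').ncard
      ≤ (S \ Sv).ncard + (S'' \ rShadow E T S).ncard := Set.ncard_union_le _ _
    _ ≤ (S \ Sv).ncard + Sv.ncard :=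
      Nat.add_le_add_left ((Set.ncard_le_ncard Set.sdiff_subset).trans hcard) _
    _ = S.ncard := Set.ncard_sdiff_add_ncard_of_subset hSvS

lemma union_diff_pushedCut_subset_rShadow (hST : S ∩ T = ∅) (hSv : IsMinSep E X T Sv)
    (hS'' : IsSep E X T S'') (hR : RSet E Sv X ⊆ RSet E S'' X) :
    (S ∪ S'') \ pushedCut E T S Sv S'' ⊆ rShadow E T (pushedCut E T S Sv S'') := by
  set S' := pushedCut E T S Sv S''
  set B := (S ∪ S'') \ S'
  have hBT : ∀ t ∈ T, t ∉ B := fun t ht hB =>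
    hB.1.elim (fun hs => hST.subset ⟨hs, ht⟩) (hS''.notMem_right ht)
  have hcover : S ∪ S'' ⊆ S' ∪ B := fun x hx => by
    by_cases hxS' : x ∈ S'
    exacts [Or.inl hxS', Or.inr ⟨hx, hxS'⟩]
  intro w hw
  refine ⟨hw.2, fun hwT => hBT w hwT hw, fun t ht hwt => ?_⟩
  obtain ⟨w', ⟨hw'SS'', hw'S'⟩, u, hw'u, huB, hut⟩ := hwt.exists_last_exit hw (hBT t ht)
  have huSS'' : u ∉ S ∪ S'' := fun hu => (hcover hu).elim hw'u.2.2 huB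
  have hut' : DReach E (S ∪ S'') u t := hut.anti hcover
  by_cases hw'r : w' ∈ rShadow E T S
  · exact hw'r.2.2 t ht (.head ⟨hw'u.1, hw'r.1, fun h => huSS'' (Or.inl h)⟩
      (hut'.anti Set.subset_union_left))
  · have hw'S'' : w' ∉ S'' := fun h => hw'S' (Or.inr ⟨h, hw'r⟩)
    have hw'Sv : w' ∈ Sv := by
      by_contra h
      exact hw'S' (Or.inl ⟨hw'SS''.resolve_right hw'S'', h⟩)
    obtain ⟨x, hx, hxw'⟩ := hSv.diff_subset_rSet hS'' hR ⟨hw'Sv, hw'S''⟩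
    exact hS''.2 x hx t ht (hxw'.trans (.head ⟨hw'u.1, hw'S'', fun h => huSS'' (Or.inr h)⟩
      (hut'.anti Set.subset_union_right)))

end PushedCut

/-- **pushing lemma.** For a multiway cut `S` and `v` in its reverse shadow,
either `S` contains an important `v`–`T` separator, or there is a multiway cut `S'` with
`|S'| ≤ |S|`, `r(S) ⊊ r(S')` and `r(S) ∪ f(S) ∪ S ⊆ r(S') ∪ f(S') ∪ S'`. -/
theorem pushing [Fintype V] (E : V → V → Prop) (T S : Set V) (v : V)
    (h : IsMWC E T S) (hv : v ∈ rShadow E T S) :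
    (∃ Sv, Sv ⊆ S ∧ IsImpSep E {v} T Sv) ∨
      ∃ S', IsMWC E T S' ∧ S'.ncard ≤ S.ncard ∧
        rShadow E T S ⊂ rShadow E T S' ∧
        rShadow E T S ∪ fShadow E T S ∪ S ⊆ rShadow E T S' ∪ fShadow E T S' ∪ S' := by
  obtain ⟨Sv, hSvS, hSv⟩ := (isSep_singleton_of_mem_rShadow h.1 hv).exists_isMinSep_subset
  by_cases himp : IsImpSep E {v} T Sv
  · exact Or.inl ⟨Sv, hSvS, himp⟩
  obtain ⟨S'', hS'', hcard, hR⟩ : ∃ S'', IsSep E {v} T S'' ∧ S''.ncard ≤ Sv.ncard ∧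
      RSet E Sv {v} ⊂ RSet E S'' {v} := by
    by_contra hc
    exact himp ⟨hSv, hc⟩
  set S' := pushedCut E T S Sv S''
  have hdiff : S \ S' ⊆ rShadow E T S' := fun x hx =>
    union_diff_pushedCut_subset_rShadow h.1 hSv hS'' hR.subset ⟨Or.inl hx.1, hx.2⟩
  obtain ⟨w, hwSv, hwS''⟩ : (Sv \ S'').Nonempty := by
    by_contra! hempty
    exact hR.ne (by rw [Set.eq_of_subset_of_ncard_le (Set.sdiff_eq_empty.1 hempty) hcard])
  have hwS' : w ∉ S' := fun hw => hw.elim (fun h => h.2 hwSv) (fun h => hwS'' h.1)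
  have hrsub := rShadow_subset_of_diff_subset hdiff disjoint_rShadow_pushedCut
  refine Or.inr ⟨S', h.of_diff_subset_rShadow hdiff (pushedCut_inter_eq_empty h.1 hS''),
    ncard_pushedCut_le hSvS hcard, ?_,
    shadows_union_subset_of_diff_subset hdiff disjoint_rShadow_pushedCut h.1⟩
  exact (Set.ssubset_iff_of_subset hrsub).2
    ⟨w, hdiff ⟨hSvS hwSv, hwS'⟩, fun hw => hw.1 (hSvS hwSv)⟩
end

section
/- In the pushing construction: let S be a multiway cut, v ∈ r(S), S_v ⊆ S a minimal v–T separator consisting of the vertices of S reachable from v without passing through other vertices of S, and let S'_v be an important v–T separator dominating S_v (|S'_v| ≤ |S_v| and R⁺(v,G\S_v) ⊊ R⁺(v,G\S'_v)). Then S' = (S \ S_v) ∪ S'_v is again a multiway cut of (G,T). -/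
variable {V : Type*}

/-!
By minimality of `Sv`, every `w ∈ Sv` has an in-neighbour reachable from `v` in `G \ Sv`;
domination makes it reachable in `G \ Sv'` as well, so every `w ∈ Sv \ Sv'` is reachable from
`v` in `G \ Sv'` and hence cannot reach `T` there. A terminal path in `G \ ((S \ Sv) ∪ Sv')`
either avoids `Sv`, and then lives in `G \ S`, or enters `Sv` at some `w ∉ Sv'`, after which it
lives in `G \ Sv'`; both are impossible.
-/

variable {E : V → V → Prop}

namespace DReach

variable {S S' X : Set V} {a b : V}

theorem mono (hSS' : S ⊆ S') (h : DReach E S' a b) : DReach E S a b :=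
  Relation.ReflTransGen.mono
    (fun _ _ hxy => ⟨hxy.1, fun hx => hxy.2.1 (hSS' hx), fun hy => hxy.2.2 (hSS' hy)⟩) _ _ h

theorem notMem_right (h : DReach E S a b) (ha : a ∉ S) : b ∉ S := by
  induction h with
  | refl => exact ha
  | tail _ hstep _ => exact hstep.2.2

theorem union_or_first_entry (h : DReach E S a b) (ha : a ∉ X) :
    DReach E (S ∪ X) a b ∨
      ∃ u w, DReach E (S ∪ X) a u ∧ E u w ∧ w ∈ X \ S ∧ DReach E S w b := by
  induction h using Relation.ReflTransGen.head_induction_on with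
  | refl => exact Or.inl .refl
  | @head x c hxc hcb ih =>
    by_cases hc : c ∈ X
    · exact Or.inr ⟨x, c, .refl, hxc.1, ⟨hc, hxc.2.2⟩, hcb⟩
    · have hstep : DStep E (S ∪ X) x c :=
        ⟨hxc.1, fun hx => hx.elim hxc.2.1 ha, fun hc' => hc'.elim hxc.2.2 hc⟩
      rcases ih hc with hcb | ⟨u, w, hcu, huw, hw, hwb⟩
      · exact Or.inl (.head hstep hcb)
      · exact Or.inr ⟨u, w, .head hstep hcu, huw, hw, hwb⟩

end DReach

section Separators

variable {X Y S Sv Sv' : Set V}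

theorem IsSep.disjoint_left (h : IsSep E X Y S) : Disjoint X S :=
  Set.disjoint_left.2 fun _ hx hxS => (h.1.subset ⟨hxS, Or.inl hx⟩ : _ ∈ (∅ : Set V))

theorem IsSep.disjoint_right (h : IsSep E X Y S) : Disjoint Y S :=
  Set.disjoint_left.2 fun _ hy hyS => (h.1.subset ⟨hyS, Or.inr hy⟩ : _ ∈ (∅ : Set V))

theorem IsMinSep.mem_rSet_of_rSet_subset (hmin : IsMinSep E X Y Sv) (hX : Disjoint X Sv')
    (hdom : RSet E Sv X ⊆ RSet E Sv' X) {w : V} (hw : w ∈ Sv) (hw' : w ∉ Sv') :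
    w ∈ RSet E Sv' X := by
  have hsep := hmin.1
  have hnotsep : ¬ IsSep E X Y (Sv \ {w}) := hmin.2 _ (Set.sdiff_singleton_ssubset.2 hw)
  have hdisj : (Sv \ {w}) ∩ (X ∪ Y) = ∅ :=
    Set.subset_empty_iff.1 (hsep.1 ▸ Set.inter_subset_inter_left _ Set.sdiff_subset)
  obtain ⟨x, hx, y, hy, hxy⟩ : ∃ x ∈ X, ∃ y ∈ Y, DReach E (Sv \ {w}) x y := by
    simpa [IsSep, hdisj] using hnotsep
  rcases hxy.union_or_first_entry (Set.disjoint_left.1 hsep.disjoint_left hx) with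
    hxy | ⟨u, w', hxu, huw', hw'w, -⟩
  · exact absurd (hxy.mono Set.subset_union_right) (hsep.2 x hx y hy)
  · obtain rfl : w' = w := by simpa [hw'w.1] using hw'w.2
    obtain ⟨x', hx', hx'u⟩ := hdom ⟨x, hx, hxu.mono Set.subset_union_right⟩
    exact ⟨x', hx', hx'u.tail ⟨huw', hx'u.notMem_right (Set.disjoint_left.1 hX hx'), hw'⟩⟩

end Separators

theorem IsMWC.diff_union {T S Sv Sv' : Set V} (h : IsMWC E T S) (hSv : Disjoint T Sv)
    (hSv' : Disjoint T Sv') (hcut : ∀ w ∈ Sv \ Sv', ∀ t ∈ T, ¬ DReach E Sv' w t) :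
    IsMWC E T (S \ Sv ∪ Sv') := by
  refine ⟨Set.disjoint_iff_inter_eq_empty.1 ?_, fun t₁ ht₁ t₂ ht₂ hne hpath => ?_⟩
  · exact Disjoint.union_left
      (Set.disjoint_of_subset_left Set.sdiff_subset (Set.disjoint_iff_inter_eq_empty.2 h.1))
      hSv'.symm
  · rcases hpath.union_or_first_entry (Set.disjoint_left.1 hSv ht₁) with
      hpath | ⟨-, w, -, -, hw, hwt₂⟩
    · have hS : S ⊆ S \ Sv ∪ Sv' ∪ Sv := fun x hx => by
        by_cases hxSv : x ∈ Sv <;> simp [hx, hxSv]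
      exact h.2 t₁ ht₁ t₂ ht₂ hne (hpath.mono hS)
    · exact hcut w ⟨hw.1, fun hw' => hw.2 (Or.inr hw')⟩ t₂ ht₂
        (hwt₂.mono Set.subset_union_right)

theorem pushing_construction_general (E : V → V → Prop) (T S : Set V) (v : V)
    (Sv Sv' : Set V)
    (h : IsMWC E T S)
    (hmin : IsMinSep E {v} T Sv)
    (himp : IsImpSep E {v} T Sv')
    (hdom : RSet E Sv {v} ⊂ RSet E Sv' {v}) :
    IsMWC E T ((S \ Sv) ∪ Sv') := by
  have hsep' : IsSep E {v} T Sv' := himp.1.1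
  refine h.diff_union hmin.1.disjoint_right hsep'.disjoint_right fun w hw t ht hwt => ?_
  obtain ⟨_, rfl, hvw⟩ := hmin.mem_rSet_of_rSet_subset hsep'.disjoint_left hdom.1 hw.1 hw.2
  exact hsep'.2 _ rfl t ht (hvw.trans hwt)

/-- **pushing construction.** Replacing, inside a multiway cut `S`, the
minimal `v`–`T` separator `Sv ⊆ S` (consisting of vertices of `S` reachable from `v`
without passing through other vertices of `S`) by an important `v`–`T` separator `Sv'`
dominating it yields again a multiway cut. -/
theorem pushing_construction (E : V → V → Prop) (T S : Set V) (v : V)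
    (Sv Sv' : Set V)
    (h : IsMWC E T S) (hv : v ∈ rShadow E T S)
    (hsub : Sv ⊆ S) (hmin : IsMinSep E {v} T Sv)
    (hreach : Sv ⊆ {w | ∃ u, DReach E S v u ∧ E u w})
    (himp : IsImpSep E {v} T Sv')
    (hcard : Sv'.ncard ≤ Sv.ncard)
    (hdom : RSet E Sv {v} ⊂ RSet E Sv' {v}) :
    IsMWC E T ((S \ Sv) ∪ Sv') :=
  pushing_construction_general E T S v Sv Sv' h hmin himp hdom
end

section
/- Given an instance (G,T,p) of Directed Multicut with two terminal pairs T={(s₁,t₁),(s₂,t₂)}, construct G' by adding two new vertices s, t and the edges s→s₁, t₁→t, t→s₂, t₂→s. Then for any vertex set S ⊆ V(G): G \ S has an sᵢ→tᵢ path for some i ∈ {1,2} if and only if G' \ S has an s→t path or a t→s path. Consequently, S is a multicut of (G,T) iff S is a multiway cut of (G',{s,t}). -/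
variable {V : Type*}

/-- There is a directed `a → b` path in `G \ S` whose vertices (including the endpoints)
avoid `S`. -/
def PathAvoid (E : V → V → Prop) (S : Set V) (a b : V) : Prop :=
  a ∉ S ∧ b ∉ S ∧ DReach E S a b

/-- The graph `G'` of the multicut-to-multiway-cut reduction: `G` together with two new
vertices `s = Sum.inr false` and `t = Sum.inr true` and the edges `s → s₁`, `t₁ → t`,
`t → s₂`, `t₂ → s`. -/
def GExt (E : V → V → Prop) (s₁ t₁ s₂ t₂ : V) : V ⊕ Bool → V ⊕ Bool → Prop
  | Sum.inl a, Sum.inl b => E a b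
  | Sum.inr false, Sum.inl b => b = s₁
  | Sum.inl a, Sum.inr true => a = t₁
  | Sum.inr true, Sum.inl b => b = s₂
  | Sum.inl a, Sum.inr false => a = t₂
  | Sum.inr _, Sum.inr _ => False

/-! A walk in `G' \ S` leaving `s` enters `G` at `s₁` and can leave `G` again only along
`t₁ → t` or `t₂ → s`; so it reaches `t` exactly when `G \ S` has an `s₁ → t₁` path. Exchanging
the names `s` and `t` turns `G'` into the graph built from the two pairs in the other order,
which gives the `t → s` case. A multiway cut of `{s, t}` is a set cutting both directions. -/

section Reachability

variable {E : V → V → Prop} {S : Set V} {a b c : V}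

lemma PathAvoid.tail (h : PathAvoid E S a b) (hbc : DStep E S b c) : PathAvoid E S a c :=
  ⟨h.1, hbc.2.2, h.2.2.tail hbc⟩

lemma pathAvoid_iff_dReach (ha : a ∉ S) (hb : b ∉ S) :
    PathAvoid E S a b ↔ DReach E S a b := by
  simp [PathAvoid, ha, hb]

lemma isMWC_pair_iff (hab : a ≠ b) :
    IsMWC E {a, b} S ↔ (a ∉ S ∧ b ∉ S) ∧ ¬ DReach E S a b ∧ ¬ DReach E S b a := by
  simp only [IsMWC, Set.eq_empty_iff_forall_notMem, Set.mem_inter_iff, Set.mem_insert_iff,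
    Set.mem_singleton_iff]
  grind

end Reachability

namespace GExt

variable {E : V → V → Prop} {s₁ t₁ s₂ t₂ : V} {S : Set V}

lemma dReach_inl {a b : V} (h : DReach E S a b) :
    DReach (GExt E s₁ t₁ s₂ t₂) (Sum.inl '' S) (.inl a) (.inl b) :=
  h.lift Sum.inl fun _ _ ⟨hE, ha, hb⟩ => ⟨hE, by simpa using ha, by simpa using hb⟩

lemma dReach_swap {x y : V ⊕ Bool} (h : DReach (GExt E s₁ t₁ s₂ t₂) (Sum.inl '' S) x y) :
    DReach (GExt E s₂ t₂ s₁ t₁) (Sum.inl '' S) (Sum.map id not x) (Sum.map id not y) := by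
  have mem_iff (z : V ⊕ Bool) : Sum.map id not z ∈ Sum.inl '' S ↔ z ∈ Sum.inl '' S := by
    rcases z with _ | _ <;> simp
  refine h.lift _ fun x y ⟨hE, hx, hy⟩ => ⟨?_, (mem_iff x).not.mpr hx, (mem_iff y).not.mpr hy⟩
  rcases x with _ | _ | _ <;> rcases y with _ | _ | _ <;> exact hE

lemma dReach_s_t_of_pathAvoid (h : PathAvoid E S s₁ t₁) :
    DReach (GExt E s₁ t₁ s₂ t₂) (Sum.inl '' S) (.inr false) (.inr true) := by
  obtain ⟨hs₁, ht₁, hreach⟩ := h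
  have enter : DStep (GExt E s₁ t₁ s₂ t₂) (Sum.inl '' S) (.inr false) (.inl s₁) :=
    ⟨rfl, by simp, by simpa using hs₁⟩
  have leave : DStep (GExt E s₁ t₁ s₂ t₂) (Sum.inl '' S) (.inl t₁) (.inr true) :=
    ⟨rfl, by simpa using ht₁, by simp⟩
  exact ((Relation.ReflTransGen.single enter).trans (dReach_inl hreach)).tail leave

lemma dReach_from_s {v : V ⊕ Bool}
    (h : DReach (GExt E s₁ t₁ s₂ t₂) (Sum.inl '' S) (.inr false) v) :
    v = .inr false ∨ (∃ a, v = .inl a ∧ PathAvoid E S s₁ a) ∨ PathAvoid E S s₁ t₁ := by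
  induction h with
  | refl => exact .inl rfl
  | @tail _ w _ step ih =>
    obtain ⟨hE, -, hw⟩ := step
    rcases ih with rfl | ⟨a, rfl, ha⟩ | done
    · rcases w with b | _
      · obtain rfl : b = s₁ := hE
        have hb : b ∉ S := by simpa using hw
        exact .inr (.inl ⟨b, rfl, hb, hb, .refl⟩)
      · exact hE.elim
    · rcases w with b | _ | _
      · exact .inr (.inl ⟨b, rfl, ha.tail ⟨hE, ha.2.1, by simpa using hw⟩⟩)
      · exact .inl rfl
      · obtain rfl : a = t₁ := hE
        exact .inr (.inr ha)
    · exact .inr (.inr done)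

lemma dReach_s_t_iff :
    DReach (GExt E s₁ t₁ s₂ t₂) (Sum.inl '' S) (.inr false) (.inr true) ↔
      PathAvoid E S s₁ t₁ := by
  refine ⟨fun h => ?_, dReach_s_t_of_pathAvoid⟩
  rcases dReach_from_s h with h | ⟨_, h, -⟩ | h
  · cases h
  · cases h
  · exact h

lemma dReach_t_s_iff :
    DReach (GExt E s₁ t₁ s₂ t₂) (Sum.inl '' S) (.inr true) (.inr false) ↔
      PathAvoid E S s₂ t₂ :=
  ⟨fun h => dReach_s_t_iff.mp (dReach_swap h), fun h => dReach_swap (dReach_s_t_iff.mpr h)⟩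

end GExt

/-- `G \ S` has an `sᵢ → tᵢ` path for some `i ∈ {1,2}` iff `G' \ S` has an
`s → t` path or a `t → s` path; consequently `S` is a multicut of `(G, {(s₁,t₁),(s₂,t₂)})`
iff `S` is a multiway cut of `(G', {s, t})`. -/
theorem multicut_two_pairs_to_multiway_cut (E : V → V → Prop) (s₁ t₁ s₂ t₂ : V)
    (S : Set V) :
    ((PathAvoid E S s₁ t₁ ∨ PathAvoid E S s₂ t₂) ↔
      (PathAvoid (GExt E s₁ t₁ s₂ t₂) (Sum.inl '' S) (Sum.inr false) (Sum.inr true) ∨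
        PathAvoid (GExt E s₁ t₁ s₂ t₂) (Sum.inl '' S) (Sum.inr true) (Sum.inr false))) ∧
    ((¬ PathAvoid E S s₁ t₁ ∧ ¬ PathAvoid E S s₂ t₂) ↔
      IsMWC (GExt E s₁ t₁ s₂ t₂)
        {Sum.inr false, Sum.inr true} (Sum.inl '' S)) := by
  have hs : (Sum.inr false : V ⊕ Bool) ∉ Sum.inl '' S := by simp
  have ht : (Sum.inr true : V ⊕ Bool) ∉ Sum.inl '' S := by simp
  rw [pathAvoid_iff_dReach hs ht, pathAvoid_iff_dReach ht hs, isMWC_pair_iff (by simp),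
    GExt.dReach_s_t_iff, GExt.dReach_t_s_iff]
  exact ⟨Iff.rfl, by simp [hs, ht]⟩
end
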